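/- Expected nearest-neighbor distance moment bound: if X_1,…,X_n are i.i.d. from a distribution on [0,1]^d satisfying P_X(B(x,r)) ≥ c r^d for all 0 < r < r_λ and x in the support, then for any β > 0 there is a constant C (depending on c, d, β, r_λ) with E[‖X_{(1)}(x) − x‖^β] ≤ C n^{−β/d} for all x in the support. -/

import Mathlib

/-!
The minimum `Z` of the distances `‖Xᵢ - x‖` exceeds `t` exactly when every sample does, so by
independence `P(Z > t) = ν(‖· - x‖ > t)ⁿ`. The small-ball condition bounds the one-sample tail
by `exp(-c tᵈ)` for `t < r_λ`; the tail vanishes beyond the diameter `√d` of the cube, and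
monotonicity bridges the gap, giving `exp(-a tᵈ)` for all `t > 0` with a smaller `a`. Hence
`P(Z > t) ≤ exp(-n a tᵈ)`, and the layer-cake formula turns this into
`E[Z^β] ≤ Γ(β/d + 1) (n a)^(-β/d)`.
-/

open MeasureTheory ProbabilityTheory Real

theorem ENNReal.one_sub_ofReal_le_ofReal_exp_neg (s : ℝ) :
    1 - ENNReal.ofReal s ≤ ENNReal.ofReal (exp (-s)) := by
  refine tsub_le_iff_right.2 <| le_trans ?_ <|
    add_le_add_left (ENNReal.ofReal_le_ofReal (one_sub_le_exp_neg s)) _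
  simpa using ENNReal.ofReal_add_le (p := 1 - s) (q := s)

theorem integral_rpow_le_of_meas_lt_le_exp {Ω : Type*} [MeasurableSpace Ω] {μ : Measure Ω}
    {Z : Ω → ℝ} (hZ0 : 0 ≤ᵐ[μ] Z) (hZ : AEMeasurable Z μ) {a p β : ℝ}
    (ha : 0 < a) (hp : 0 < p) (hβ : 0 < β)
    (htail : ∀ t > 0, μ {ω | t < Z ω} ≤ ENNReal.ofReal (exp (-(a * t ^ p)))) :
    ∫ ω, Z ω ^ β ∂μ ≤ Gamma (β / p + 1) * a ^ (-(β / p)) := by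
  set g : ℝ → ℝ := fun t => t ^ (β - 1) * exp (-a * t ^ p)
  have hg : ∫ t in Set.Ioi 0, g t = a ^ (-(β / p)) * (1 / p) * Gamma (β / p) := by
    simpa [g, neg_div] using integral_rpow_mul_exp_neg_mul_rpow hp (by linarith : -1 < β - 1) ha
  have hg_lintegral : ∫⁻ t in Set.Ioi 0, ENNReal.ofReal (g t)
      = ENNReal.ofReal (∫ t in Set.Ioi 0, g t) := by
    refine (ofReal_integral_eq_lintegral_ofReal ?_ ?_).symm
    · exact integrableOn_rpow_mul_exp_neg_mul_rpow (by linarith) hp ha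
    · filter_upwards [self_mem_ae_restrict measurableSet_Ioi] with t ht
      exact mul_nonneg (rpow_nonneg (le_of_lt ht) _) (exp_nonneg _)
  have hmoment : ∫⁻ ω, ENNReal.ofReal (Z ω ^ β) ∂μ
      ≤ ENNReal.ofReal (β * ∫ t in Set.Ioi 0, g t) := by
    rw [lintegral_rpow_eq_lintegral_meas_lt_mul μ hZ0 hZ hβ, ENNReal.ofReal_mul hβ.le,
      ← hg_lintegral]
    gcongr _ * ?_
    refine setLIntegral_mono' (measurableSet_Ioi (a := (0:ℝ))) fun t ht => ?_
    rw [mul_comm, ENNReal.ofReal_mul (rpow_nonneg (le_of_lt ht) _), neg_mul]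
    gcongr
    exact htail t ht
  rw [integral_eq_lintegral_of_nonneg_ae (hZ0.mono fun ω h => rpow_nonneg h β)
    (hZ.pow_const β).aestronglyMeasurable]
  refine ENNReal.toReal_le_of_le_ofReal (by positivity) (hmoment.trans_eq ?_)
  rw [hg, Gamma_add_one (by positivity)]
  ring_nf

theorem measure_lt_inf'_eq_pow {Ω E ι : Type*} [MeasurableSpace Ω] [MeasurableSpace E]
    [Fintype ι] {μ : Measure Ω} {ν : Measure E} {X : ι → Ω → E} (hX : ∀ i, Measurable (X i))
    (hlaw : ∀ i, μ.map (X i) = ν) (hind : iIndepFun X μ) {f : E → ℝ} (hf : Measurable f)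
    (hne : (Finset.univ : Finset ι).Nonempty) (t : ℝ) :
    μ {ω | t < Finset.univ.inf' hne fun i => f (X i ω)} = ν {y | t < f y} ^ Fintype.card ι := by
  have hS : MeasurableSet {y | t < f y} := measurableSet_lt measurable_const hf
  have hinter : {ω | t < Finset.univ.inf' hne fun i => f (X i ω)}
      = ⋂ i ∈ Finset.univ, X i ⁻¹' {y | t < f y} := by
    ext ω
    simp [Finset.lt_inf'_iff]
  rw [hinter, hind.measure_inter_preimage_eq_mul _ fun _ _ => hS]
  simp_rw [← Measure.map_apply (hX _) hS, hlaw]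
  simp

theorem measure_lt_norm_sub_le_exp_neg {E : Type*} [NormedAddCommGroup E] [MeasurableSpace E]
    [OpensMeasurableSpace E] {ν : Measure E} [IsProbabilityMeasure ν] {x : E} {r s : ℝ}
    (hs : ENNReal.ofReal s ≤ ν (Metric.ball x r)) :
    ν {y | r < ‖y - x‖} ≤ ENNReal.ofReal (exp (-s)) := calc
  ν {y | r < ‖y - x‖} ≤ ν (Metric.ball x r)ᶜ :=
    measure_mono fun y hy => by simpa [dist_eq_norm] using hy.le
  _ = 1 - ν (Metric.ball x r) := prob_compl_eq_one_sub measurableSet_ball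
  _ ≤ 1 - ENNReal.ofReal s := tsub_le_tsub_left hs 1
  _ ≤ ENNReal.ofReal (exp (-s)) := ENNReal.one_sub_ofReal_le_ofReal_exp_neg s

theorem Antitone.le_ofReal_exp_neg_mul_pow {F : ℝ → ENNReal} (hF : Antitone F) {a ρ R : ℝ}
    {d : ℕ} (ha : 0 ≤ a) (hρ : 0 < ρ) (hρR : ρ ≤ R)
    (hsmall : ∀ t, 0 < t → t ≤ ρ → F t ≤ ENNReal.ofReal (exp (-(a * t ^ d))))
    (hlarge : ∀ t, R ≤ t → F t = 0) {t : ℝ} (ht : 0 < t) :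
    F t ≤ ENNReal.ofReal (exp (-(a * (ρ / R) ^ d * t ^ d))) := by
  have hR : 0 < R := hρ.trans_le hρR
  have hratio : (ρ / R) ^ d ≤ 1 := pow_le_one₀ (by positivity) ((div_le_one hR).2 hρR)
  rcases le_total t ρ with htρ | hρt
  · refine (hsmall t ht htρ).trans (ENNReal.ofReal_le_ofReal (exp_le_exp.2 ?_))
    have := mul_le_mul_of_nonneg_left hratio (by positivity : 0 ≤ a * t ^ d)
    nlinarith
  rcases lt_or_ge t R with htR | hRt
  · refine (hF hρt).trans <| (hsmall ρ hρ le_rfl).trans <|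
      ENNReal.ofReal_le_ofReal (exp_le_exp.2 ?_)
    have : (ρ / R) ^ d * t ^ d ≤ ρ ^ d := by
      rw [← mul_pow]
      refine pow_le_pow_left₀ (by positivity) ?_ d
      rw [div_mul_eq_mul_div, div_le_iff₀ hR]
      nlinarith
    nlinarith [mul_le_mul_of_nonneg_left this ha]
  · simp [hlarge t hRt]

def unitCube (d : ℕ) : Set (EuclideanSpace ℝ (Fin d)) :=
  WithLp.ofLp ⁻¹' Set.univ.pi fun _ => Set.Icc 0 1

theorem measurableSet_unitCube (d : ℕ) : MeasurableSet (unitCube d) :=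
  (MeasurableSet.univ_pi fun _ => measurableSet_Icc).preimage (by fun_prop)

theorem norm_sub_le_sqrt_of_mem_unitCube {d : ℕ} {x y : EuclideanSpace ℝ (Fin d)}
    (hx : x ∈ unitCube d) (hy : y ∈ unitCube d) : ‖y - x‖ ≤ √d := by
  rw [EuclideanSpace.norm_eq]
  refine sqrt_le_sqrt ((Finset.sum_le_card_nsmul _ _ 1 fun i _ => ?_).trans (by simp))
  obtain ⟨hx0, hx1⟩ := hx i (Set.mem_univ i)
  obtain ⟨hy0, hy1⟩ := hy i (Set.mem_univ i)
  rw [WithLp.ofLp_sub, Pi.sub_apply, norm_eq_abs, sq_abs]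
  nlinarith

theorem measure_lt_norm_sub_eq_zero_of_sqrt_le {d : ℕ} {ν : Measure (EuclideanSpace ℝ (Fin d))}
    [IsProbabilityMeasure ν] (hν : ν (unitCube d) = 1) {x : EuclideanSpace ℝ (Fin d)}
    (hx : x ∈ unitCube d) {t : ℝ} (ht : √d ≤ t) : ν {y | t < ‖y - x‖} = 0 :=
  measure_mono_null
    (fun _ hy hyQ => (norm_sub_le_sqrt_of_mem_unitCube hx hyQ).not_gt (ht.trans_lt hy))
    ((prob_compl_eq_zero_iff (measurableSet_unitCube d)).2 hν)

/-- Expected nearest-neighbor distance moment bound: if the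
sampling distribution ν on [0,1]^d satisfies ν(B(x,r)) ≥ c r^d for 0 < r < r_λ
and x in the support, then E[‖X_(1)(x) − x‖^β] ≤ C n^{−β/d} for a constant C
depending only on c, d, β, r_λ. -/
theorem expected_nn_distance_moment
    {d : ℕ} (hd : 1 ≤ d)
    (ν : Measure (EuclideanSpace ℝ (Fin d))) [IsProbabilityMeasure ν]
    (supp : Set (EuclideanSpace ℝ (Fin d)))
    (hsupp : supp ⊆ (WithLp.ofLp : EuclideanSpace ℝ (Fin d) → (Fin d → ℝ)) ⁻¹'
      (Set.univ.pi fun _ => Set.Icc (0:ℝ) 1))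
    (hνsupp : ν supp = 1)
    (c rlam β : ℝ) (hc : 0 < c) (hrlam : 0 < rlam) (hβ : 0 < β)
    (hball : ∀ x ∈ supp, ∀ r : ℝ, 0 < r → r < rlam →
      ENNReal.ofReal (c * r ^ d) ≤ ν (Metric.ball x r)) :
    ∃ C : ℝ, 0 < C ∧
      ∀ (n : ℕ) (hn : 1 ≤ n),
      ∀ (Ω : Type) (_ : MeasurableSpace Ω) (μ : Measure Ω),
        IsProbabilityMeasure μ →
      ∀ (Xs : Fin n → Ω → EuclideanSpace ℝ (Fin d)),
        (∀ i, Measurable (Xs i)) →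
        (∀ i, Measure.map (Xs i) μ = ν) →
        iIndepFun Xs μ →
      ∀ x ∈ supp,
        (∫ ω, (Finset.univ.inf' (Finset.univ_nonempty_iff.mpr
            ⟨⟨0, by omega⟩⟩) fun i => ‖Xs i ω - x‖) ^ β ∂μ)
          ≤ C * (n : ℝ) ^ (-(β / d)) := by
  have hd0 : (0 : ℝ) < d := by exact_mod_cast hd
  have hcube : ν (unitCube d) = 1 := le_antisymm prob_le_one (hνsupp ▸ measure_mono hsupp)
  set ρ := min (rlam / 2) √d
  have hρ : 0 < ρ := lt_min (by positivity) (by positivity)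
  set a := c * (ρ / √d) ^ d
  have ha : 0 < a := by positivity
  refine ⟨Gamma (β / d + 1) * a ^ (-(β / d)), by positivity, ?_⟩
  intro n hn Ω _ μ _ Xs hXs hlaw hind x hx
  have hsample : ∀ t > 0, ν {y | t < ‖y - x‖} ≤ ENNReal.ofReal (exp (-(a * t ^ d))) :=
    fun t ht => Antitone.le_ofReal_exp_neg_mul_pow (F := fun t => ν {y | t < ‖y - x‖})
      (fun s t hst => measure_mono fun y hy => hst.trans_lt hy) hc.le hρ (min_le_right _ _)
      (fun s hs hsρ => measure_lt_norm_sub_le_exp_neg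
        (hball x hx s hs (hsρ.trans_lt ((min_le_left _ _).trans_lt (by linarith)))))
      (fun s hs => measure_lt_norm_sub_eq_zero_of_sqrt_le hcube (hsupp hx) hs) ht
  calc _ ≤ Gamma (β / d + 1) * (n * a) ^ (-(β / d)) := by
        refine integral_rpow_le_of_meas_lt_le_exp
          (Filter.Eventually.of_forall fun ω => Finset.le_inf' _ _ fun i _ => norm_nonneg _)
          (by fun_prop) (by positivity) hd0 hβ fun t ht => ?_
        rw [measure_lt_inf'_eq_pow hXs hlaw hind (f := fun y => ‖y - x‖) (by fun_prop),
          Fintype.card_fin, rpow_natCast]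
        refine (pow_le_pow_left' (hsample t ht) n).trans_eq ?_
        rw [← ENNReal.ofReal_pow (exp_nonneg _), ← exp_nat_mul]
        ring_nf
    _ = _ := by rw [mul_rpow (by positivity) ha.le]; ring
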